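/- Define z : ℝ² → ℝ by z(x₁,x₂) := (1/64) ( cosh(2πx₁ − π)/cosh(π) − cos(2πx₁) ) sin(2πx₂), and f(x₁,x₂) := 8π² sin(2πx₁) sin(2πx₂). Then: (i) −Δz(x) = −(1/(128π)) ∂₁f(x) = −(π²/8) cos(2πx₁) sin(2πx₂) for every x ∈ ℝ²; (ii) z vanishes on the boundary of the square Ω := (0,1)², i.e., z(x) = 0 whenever x₁ ∈ {0,1} or x₂ ∈ {0,1}. -/

import Mathlib

/-- Partial derivative w.r.t. the first variable. -/
noncomputable def p1 (f : ℝ → ℝ → ℝ) : ℝ → ℝ → ℝ := fun x y => deriv (fun t => f t y) x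

/-- Partial derivative w.r.t. the second variable. -/
noncomputable def p2 (f : ℝ → ℝ → ℝ) : ℝ → ℝ → ℝ := fun x y => deriv (fun t => f x t) y

/-- The function `z`. -/
noncomputable def zz (x₁ x₂ : ℝ) : ℝ :=
  (1/64) * (Real.cosh (2 * Real.pi * x₁ - Real.pi) / Real.cosh Real.pi
    - Real.cos (2 * Real.pi * x₁)) * Real.sin (2 * Real.pi * x₂)

/-- The right-hand side `f`. -/
noncomputable def ff (x₁ x₂ : ℝ) : ℝ :=
  8 * Real.pi ^ 2 * Real.sin (2 * Real.pi * x₁) * Real.sin (2 * Real.pi * x₂)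

/-!
The function `z` separates as `Z(x₁) · sin(2πx₂)`. Both `sin(2π·)` and `cos(2π·)` satisfy
`u'' = -4π² u`, while `cosh(2π· - π)` satisfies `u'' = 4π² u`; hence in
`Δz = (Z'' - 4π² Z) sin(2πx₂)` the `cosh` terms cancel and the `cos` terms double. The `cosh` term is normalised by `cosh π`,
its value at both ends of `[0, 1]`, so that `Z` vanishes at `0` and `1`.
-/

open Real

section Separable

variable (u v : ℝ → ℝ)

theorem p1_fun_mul : p1 (fun x y => u x * v y) = fun x y => deriv u x * v y := by
  funext x y
  exact deriv_mul_const_field (v y)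

theorem p2_fun_mul : p2 (fun x y => u x * v y) = fun x y => u x * deriv v y := by
  funext x y
  exact deriv_const_mul_field (u x)

theorem laplacian_fun_mul (x y : ℝ) :
    p1 (p1 fun x y => u x * v y) x y + p2 (p2 fun x y => u x * v y) x y
      = deriv (deriv u) x * v y + u x * deriv (deriv v) y := by
  rw [p1_fun_mul, p1_fun_mul, p2_fun_mul, p2_fun_mul]

end Separable

theorem deriv_sin_mul (a : ℝ) : deriv (fun t => sin (a * t)) = fun t => a * cos (a * t) := by
  funext t
  rw [((hasDerivAt_const_mul (x := t) a).sin).deriv, mul_comm]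

theorem deriv_deriv_sin_mul (a : ℝ) :
    deriv (deriv fun t => sin (a * t)) = fun t => -(a ^ 2 * sin (a * t)) := by
  funext t
  rw [deriv_sin_mul, (((hasDerivAt_const_mul (x := t) a).cos).const_mul a).deriv]
  ring

noncomputable def zProfile (t : ℝ) : ℝ :=
  (1/64) * (cosh (2 * π * t - π) / cosh π - cos (2 * π * t))

theorem zz_eq_fun_mul : zz = fun x y => zProfile x * sin (2 * π * y) := rfl

theorem deriv_zProfile :
    deriv zProfile = fun t => π / 32 * (sinh (2 * π * t - π) / cosh π + sin (2 * π * t)) := by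
  funext t
  refine (((((hasDerivAt_const_mul (x := t) (2 * π)).sub_const π).cosh.div_const (cosh π)).sub
    (hasDerivAt_const_mul (x := t) (2 * π)).cos).const_mul (1/64)).deriv.trans ?_
  ring

theorem deriv_deriv_zProfile :
    deriv (deriv zProfile)
      = fun t => π ^ 2 / 16 * (cosh (2 * π * t - π) / cosh π + cos (2 * π * t)) := by
  funext t
  rw [deriv_zProfile]
  refine (((((hasDerivAt_const_mul (x := t) (2 * π)).sub_const π).sinh.div_const (cosh π)).add
    (hasDerivAt_const_mul (x := t) (2 * π)).sin).const_mul (π / 32)).deriv.trans ?_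
  ring

theorem zProfile_zero : zProfile 0 = 0 := by
  simp [zProfile, div_self (cosh_pos π).ne']

theorem zProfile_one : zProfile 1 = 0 := by
  rw [zProfile, show 2 * π * 1 - π = π by ring, div_self (cosh_pos π).ne', mul_one, cos_two_pi]
  ring

theorem laplacian_zz (x y : ℝ) :
    p1 (p1 zz) x y + p2 (p2 zz) x y = π ^ 2 / 8 * cos (2 * π * x) * sin (2 * π * y) := by
  rw [zz_eq_fun_mul, laplacian_fun_mul, deriv_deriv_zProfile, deriv_deriv_sin_mul, zProfile]
  ring

theorem p1_ff (x y : ℝ) : p1 ff x y = 16 * π ^ 3 * cos (2 * π * x) * sin (2 * π * y) := by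
  change p1 (fun x y => (8 * π ^ 2 * sin (2 * π * x)) * sin (2 * π * y)) x y = _
  rw [p1_fun_mul, deriv_const_mul_field', deriv_sin_mul]
  ring

/-- `z` satisfies `−Δz = −(1/(128π)) ∂₁ f = −(π²/8) cos(2πx₁) sin(2πx₂)` on `ℝ²` and
vanishes on the boundary of the square `Ω = (0,1)²`. -/
theorem z_solves_poisson_problem :
    (∀ x₁ x₂ : ℝ,
        -(p1 (p1 zz) x₁ x₂ + p2 (p2 zz) x₁ x₂) = -(1 / (128 * Real.pi)) * p1 ff x₁ x₂ ∧
        -(p1 (p1 zz) x₁ x₂ + p2 (p2 zz) x₁ x₂)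
          = -(Real.pi ^ 2 / 8) * Real.cos (2 * Real.pi * x₁) * Real.sin (2 * Real.pi * x₂)) ∧
    (∀ x₁ x₂ : ℝ, (x₁ = 0 ∨ x₁ = 1 ∨ x₂ = 0 ∨ x₂ = 1) → zz x₁ x₂ = 0) := by
  refine ⟨fun x₁ x₂ => ⟨?_, ?_⟩, ?_⟩
  · rw [laplacian_zz, p1_ff]
    field_simp
    ring
  · rw [laplacian_zz]
    ring
  · rintro x₁ x₂ (rfl | rfl | rfl | rfl) <;>
      simp [zz_eq_fun_mul, zProfile_zero, zProfile_one]
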